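/- Let A be the ℂ-algebra presented by generators a, b, c, d and relations da = ad, db = q²bd, dc = q^{-2}cd, ba = ab + q^{-1}q̂·bd, cb = bc + q^{-1}q̂·(da − d²), ca = ac − q^{-1}q̂·dc, ad − q²bc = 1, b^p = c^p = 0, d^{2p} = 1. Then the monomials b^i c^j d^k (0 ≤ i,j ≤ p−1, 0 ≤ k ≤ 2p−1) form a basis of A (so dim A = 2p³), and the assignment a ↦ K + q^{-1}q̂²FE, b ↦ q^{-1}q̂F, c ↦ q̂K^{-1}E, d ↦ K^{-1} defines an isomorphism of ℂ-algebras A → Ūq (this is the presentation of the loop algebra L_{0,1}(Ūq) ≅ Ūq). -/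

import Mathlib

/- STATEMENT 16: the algebra `A` presented by generators `a,b,c,d` and the listed
relations has the monomials `bⁱcʲdᵏ` as a basis (so `dim A = 2p³`), and
`a ↦ K + q⁻¹q̂²FE, b ↦ q⁻¹q̂F, c ↦ q̂K⁻¹E, d ↦ K⁻¹` defines an isomorphism `A ≅ Ū_q`. -/

noncomputable section

open scoped TensorProduct

/-- `q = exp(iπ/p)`. -/
def qval (p : ℕ) : ℂ := Complex.exp ((Real.pi : ℂ) * Complex.I / p)

/-- the fixed square root `q^{1/2} = exp(iπ/2p)`. -/
def q2val (p : ℕ) : ℂ := Complex.exp ((Real.pi : ℂ) * Complex.I / (2 * p))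

/-- the quantum integer `[n] = (qⁿ - q⁻ⁿ)/(q - q⁻¹)`. -/
def qint (q : ℂ) (n : ℕ) : ℂ := (q ^ n - q⁻¹ ^ n) / (q - q⁻¹)

/-- the quantum factorial `[n]! = [1][2]⋯[n]`. -/
def qfact (q : ℂ) : ℕ → ℂ
  | 0 => 1
  | n + 1 => qfact q n * qint q (n + 1)

/-- Symmetric linear forms on `U`. -/
def IsSLF {U : Type} [Ring U] [Algebra ℂ U] (φ : Module.Dual ℂ U) : Prop :=
  ∀ x y : U, φ (x * y) = φ (y * x)

/-- The subspace of symmetric linear forms on `U`. -/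
def SLFsub (U : Type) [Ring U] [Algebra ℂ U] : Submodule ℂ (Module.Dual ℂ U) where
  carrier := {φ | ∀ x y : U, φ (x * y) = φ (y * x)}
  add_mem' := by
    intro a b ha hb x y
    simp only [LinearMap.add_apply, ha x y, hb x y]
  zero_mem' := by intro x y; simp
  smul_mem' := by
    intro c a ha x y
    simp only [LinearMap.smul_apply, ha x y]

/-- The defining relations of the restricted quantum group `Ū_q(sl₂)`,
for an algebra `U` with elements `E`, `F`, `K` and `Ki = K⁻¹`. -/
structure UqRel (p : ℕ) {U : Type} [Ring U] [Algebra ℂ U] (E F K Ki : U) : Prop where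
  hEp : E ^ p = 0
  hFp : F ^ p = 0
  hK2p : K ^ (2 * p) = 1
  hKKi : K * Ki = 1
  hKiK : Ki * K = 1
  hKE : K * E = (qval p) ^ 2 • (E * K)
  hKF : K * F = ((qval p)⁻¹) ^ 2 • (F * K)
  hEF : E * F - F * E = (qval p - (qval p)⁻¹)⁻¹ • (K - Ki)

/-- The action of `x ∈ U` on a `U`-module `V` as a `ℂ`-linear endomorphism. -/
def actHom (U V : Type) [Ring U] [Algebra ℂ U] [AddCommGroup V] [Module ℂ V]
    [Module U V] [IsScalarTower ℂ U V] [SMulCommClass ℂ U V] :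
    U →ₗ[ℂ] (V →ₗ[ℂ] V) where
  toFun x :=
    { toFun := fun m => x • m
      map_add' := fun a b => smul_add x a b
      map_smul' := fun c m => (smul_comm c x m).symm }
  map_add' x y := by ext m; exact add_smul x y m
  map_smul' c x := by ext m; exact smul_assoc c x m

/-- The character of a finite-dimensional `U`-module `V`. -/
def chiOf (U V : Type) [Ring U] [Algebra ℂ U] [AddCommGroup V] [Module ℂ V]
    [Module U V] [IsScalarTower ℂ U V] [SMulCommClass ℂ U V] : Module.Dual ℂ U :=
  LinearMap.trace ℂ V ∘ₗ actHom U V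

/-- `V` together with the basis `B` is the simple module `X^α(s)`:
`K vᵢ = α q^{s-1-2i} vᵢ`, `E v₀ = 0`, `E vᵢ = α[i][s-i] v_{i-1}`,
`F vᵢ = v_{i+1}`, `F v_{s-1} = 0`. -/
structure IsXModule (q : ℂ) {U : Type} [Ring U] [Algebra ℂ U] (E F K : U)
    (α : ℂ) (s : ℕ) {V : Type} [AddCommGroup V] [Module ℂ V] [Module U V]
    (B : Fin s → V) : Prop where
  hK : ∀ i : Fin s, K • B i = (α * q ^ ((s : ℤ) - 1 - 2 * ((i : ℕ) : ℤ))) • B i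
  hE0 : ∀ i : Fin s, (i : ℕ) = 0 → E • B i = 0
  hE : ∀ i : Fin s, 0 < (i : ℕ) → E • B i
      = (α * qint q i * qint q (s - i)) •
          B ⟨(i : ℕ) - 1, lt_of_le_of_lt (Nat.pred_le _) i.isLt⟩
  hF : ∀ (i : Fin s) (h : (i : ℕ) + 1 < s), F • B i = B ⟨(i : ℕ) + 1, h⟩
  hFtop : ∀ i : Fin s, (i : ℕ) = s - 1 → F • B i = 0

/-- Index type for the standard basis `(bᵢ, xⱼ, y_k, a_l)` of the PIM `P^α(s)`. -/
abbrev PIdx (p s : ℕ) : Type := (Fin s ⊕ Fin (p - s)) ⊕ (Fin (p - s) ⊕ Fin s)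

def ib {p s : ℕ} (i : Fin s) : PIdx p s := Sum.inl (Sum.inl i)
def ix {p s : ℕ} (j : Fin (p - s)) : PIdx p s := Sum.inl (Sum.inr j)
def iy {p s : ℕ} (k : Fin (p - s)) : PIdx p s := Sum.inr (Sum.inl k)
def ia {p s : ℕ} (l : Fin s) : PIdx p s := Sum.inr (Sum.inr l)

/-- `V` together with the basis `B` (indexed by `PIdx p s`) is the projective
indecomposable module `P^α(s)` with its standard action. -/
structure IsPModule (q : ℂ) (p : ℕ) {U : Type} [Ring U] [Algebra ℂ U] (E F K : U)
    (α : ℂ) (s : ℕ) (hs : 0 < s) (hsp : s < p)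
    {V : Type} [AddCommGroup V] [Module ℂ V] [Module U V]
    (B : PIdx p s → V) : Prop where
  hKb : ∀ i : Fin s, K • B (ib i)
      = (α * q ^ ((s : ℤ) - 1 - 2 * ((i : ℕ) : ℤ))) • B (ib i)
  hKx : ∀ j : Fin (p - s), K • B (ix j)
      = (-α * q ^ ((p : ℤ) - s - 1 - 2 * ((j : ℕ) : ℤ))) • B (ix j)
  hKy : ∀ k : Fin (p - s), K • B (iy k)
      = (-α * q ^ ((p : ℤ) - s - 1 - 2 * ((k : ℕ) : ℤ))) • B (iy k)
  hKa : ∀ l : Fin s, K • B (ia l)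
      = (α * q ^ ((s : ℤ) - 1 - 2 * ((l : ℕ) : ℤ))) • B (ia l)
  hEb0 : E • B (ib ⟨0, hs⟩)
      = B (ix ⟨p - s - 1, Nat.sub_lt (Nat.sub_pos_of_lt hsp) one_pos⟩)
  hEb : ∀ i : Fin s, 0 < (i : ℕ) → E • B (ib i)
      = (α * qint q i * qint q (s - i)) •
          B (ib ⟨(i : ℕ) - 1, lt_of_le_of_lt (Nat.pred_le _) i.isLt⟩)
        + B (ia ⟨(i : ℕ) - 1, lt_of_le_of_lt (Nat.pred_le _) i.isLt⟩)
  hEx0 : ∀ j : Fin (p - s), (j : ℕ) = 0 → E • B (ix j) = 0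
  hEx : ∀ j : Fin (p - s), 0 < (j : ℕ) → E • B (ix j)
      = (-α * qint q j * qint q (p - s - j)) •
          B (ix ⟨(j : ℕ) - 1, lt_of_le_of_lt (Nat.pred_le _) j.isLt⟩)
  hEy0 : E • B (iy ⟨0, Nat.sub_pos_of_lt hsp⟩)
      = B (ia ⟨s - 1, Nat.sub_lt hs one_pos⟩)
  hEy : ∀ k : Fin (p - s), 0 < (k : ℕ) → E • B (iy k)
      = (-α * qint q k * qint q (p - s - k)) •
          B (iy ⟨(k : ℕ) - 1, lt_of_le_of_lt (Nat.pred_le _) k.isLt⟩)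
  hEa0 : ∀ l : Fin s, (l : ℕ) = 0 → E • B (ia l) = 0
  hEa : ∀ l : Fin s, 0 < (l : ℕ) → E • B (ia l)
      = (α * qint q l * qint q (s - l)) •
          B (ia ⟨(l : ℕ) - 1, lt_of_le_of_lt (Nat.pred_le _) l.isLt⟩)
  hFb : ∀ (i : Fin s) (h : (i : ℕ) + 1 < s), F • B (ib i) = B (ib ⟨(i : ℕ) + 1, h⟩)
  hFbtop : F • B (ib ⟨s - 1, Nat.sub_lt hs one_pos⟩)
      = B (iy ⟨0, Nat.sub_pos_of_lt hsp⟩)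
  hFx : ∀ (j : Fin (p - s)) (h : (j : ℕ) + 1 < p - s), F • B (ix j) = B (ix ⟨(j : ℕ) + 1, h⟩)
  hFxtop : F • B (ix ⟨p - s - 1, Nat.sub_lt (Nat.sub_pos_of_lt hsp) one_pos⟩)
      = B (ia ⟨0, hs⟩)
  hFy : ∀ (k : Fin (p - s)) (h : (k : ℕ) + 1 < p - s), F • B (iy k) = B (iy ⟨(k : ℕ) + 1, h⟩)
  hFytop : F • B (iy ⟨p - s - 1, Nat.sub_lt (Nat.sub_pos_of_lt hsp) one_pos⟩) = 0
  hFa : ∀ (l : Fin s) (h : (l : ℕ) + 1 < s), F • B (ia l) = B (ia ⟨(l : ℕ) + 1, h⟩)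
  hFatop : F • B (ia ⟨s - 1, Nat.sub_lt hs one_pos⟩) = 0

/-- The trace of the bottom-left `s×s` block `H^α_s(x)` of the matrix of `x`
on `P^α(s)` in a standard basis: `Σ_l (coefficient of a_l in x·b_l)`. -/
def blockTr (p s : ℕ) (U : Type) [Ring U] [Algebra ℂ U]
    (V : Type) [AddCommGroup V] [Module ℂ V] [Module U V]
    [IsScalarTower ℂ U V] [SMulCommClass ℂ U V]
    (B : Module.Basis (PIdx p s) ℂ V) : Module.Dual ℂ U :=
  ∑ l : Fin s, B.coord (ia l) ∘ₗ (actHom U V).flip (B (ib l))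

/-- The defining relations of the presented algebra `A ≅ L_{0,1}(Ū_q)`,
on the free algebra on generators `a = ι 0`, `b = ι 1`, `c = ι 2`, `d = ι 3`. -/
inductive LoopRel (p : ℕ) : FreeAlgebra ℂ (Fin 4) → FreeAlgebra ℂ (Fin 4) → Prop
  | da : LoopRel p (FreeAlgebra.ι ℂ 3 * FreeAlgebra.ι ℂ 0)
      (FreeAlgebra.ι ℂ 0 * FreeAlgebra.ι ℂ 3)
  | db : LoopRel p (FreeAlgebra.ι ℂ 3 * FreeAlgebra.ι ℂ 1)
      ((qval p) ^ 2 • (FreeAlgebra.ι ℂ 1 * FreeAlgebra.ι ℂ 3))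
  | dc : LoopRel p (FreeAlgebra.ι ℂ 3 * FreeAlgebra.ι ℂ 2)
      (((qval p)⁻¹) ^ 2 • (FreeAlgebra.ι ℂ 2 * FreeAlgebra.ι ℂ 3))
  | ba : LoopRel p (FreeAlgebra.ι ℂ 1 * FreeAlgebra.ι ℂ 0)
      (FreeAlgebra.ι ℂ 0 * FreeAlgebra.ι ℂ 1
        + ((qval p)⁻¹ * (qval p - (qval p)⁻¹)) • (FreeAlgebra.ι ℂ 1 * FreeAlgebra.ι ℂ 3))
  | cb : LoopRel p (FreeAlgebra.ι ℂ 2 * FreeAlgebra.ι ℂ 1)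
      (FreeAlgebra.ι ℂ 1 * FreeAlgebra.ι ℂ 2
        + ((qval p)⁻¹ * (qval p - (qval p)⁻¹)) •
            (FreeAlgebra.ι ℂ 3 * FreeAlgebra.ι ℂ 0 - FreeAlgebra.ι ℂ 3 * FreeAlgebra.ι ℂ 3))
  | ca : LoopRel p (FreeAlgebra.ι ℂ 2 * FreeAlgebra.ι ℂ 0)
      (FreeAlgebra.ι ℂ 0 * FreeAlgebra.ι ℂ 2
        - ((qval p)⁻¹ * (qval p - (qval p)⁻¹)) • (FreeAlgebra.ι ℂ 3 * FreeAlgebra.ι ℂ 2))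
  | det : LoopRel p (FreeAlgebra.ι ℂ 0 * FreeAlgebra.ι ℂ 3
      - (qval p) ^ 2 • (FreeAlgebra.ι ℂ 1 * FreeAlgebra.ι ℂ 2)) 1
  | bp : LoopRel p (FreeAlgebra.ι ℂ 1 ^ p) 0
  | cp : LoopRel p (FreeAlgebra.ι ℂ 2 ^ p) 0
  | d2p : LoopRel p (FreeAlgebra.ι ℂ 3 ^ (2 * p)) 1

/-- The presented algebra `A`. -/
abbrev LoopAlg (p : ℕ) : Type := RingQuot (LoopRel p)

def genA (p : ℕ) : LoopAlg p := RingQuot.mkAlgHom ℂ (LoopRel p) (FreeAlgebra.ι ℂ 0)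
def genB (p : ℕ) : LoopAlg p := RingQuot.mkAlgHom ℂ (LoopRel p) (FreeAlgebra.ι ℂ 1)
def genC (p : ℕ) : LoopAlg p := RingQuot.mkAlgHom ℂ (LoopRel p) (FreeAlgebra.ι ℂ 2)
def genD (p : ℕ) : LoopAlg p := RingQuot.mkAlgHom ℂ (LoopRel p) (FreeAlgebra.ι ℂ 3)

/-! The assignment respects the defining relations of `A` (a direct computation in `Ū_q`), so it
induces an algebra map `A → Ū_q`. Its image contains `F`, `E = q̂⁻¹ K c` and `K = (K⁻¹)^{2p-1}`,
hence it is surjective and `dim A ≥ 2p³`. Conversely, left multiplication by `b`, `c`, `d` and by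
`a = (1 + q²bc) d^{2p-1}` preserves the span of the `2p³` monomials `bⁱcʲdᵏ`: `d` skew-commutes
with `b` and `c`, and `cb = bc + q⁻¹q̂ (1 + q²bc - d²)` moves `c` past the `b`'s. So these monomials
span `A`, and comparing dimensions the map is bijective and the monomials are a basis. -/

theorem qval_isPrimitiveRoot {p : ℕ} (hp : p ≠ 0) : IsPrimitiveRoot (qval p) (2 * p) := by
  convert Complex.isPrimitiveRoot_exp (2 * p) (by positivity) using 2
  rw [qval]
  congr 1
  push_cast
  field_simp

theorem qval_ne_zero (p : ℕ) : qval p ≠ 0 := Complex.exp_ne_zero _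

theorem qval_sub_inv_ne_zero {p : ℕ} (hp : 2 ≤ p) : qval p - (qval p)⁻¹ ≠ 0 := by
  have hq2 : qval p ^ 2 ≠ 1 :=
    (qval_isPrimitiveRoot (by omega)).pow_ne_one_of_pos_of_lt two_ne_zero (by omega)
  have hq := qval_ne_zero p
  contrapose! hq2
  field_simp at hq2
  linear_combination hq2

theorem mul_mul_eq_of_mul_eq {M : Type*} [Semigroup M] {a b c : M} (h : a * b = c) (z : M) :
    a * (b * z) = c * z := by
  rw [← mul_assoc, h]

section SkewCommute
variable {R A : Type*} [CommSemiring R] [Semiring A] [Algebra R A] {a b : A} {r : R}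

theorem mul_pow_eq_smul_of_mul_eq_smul (h : a * b = r • (b * a)) (n : ℕ) :
    a * b ^ n = r ^ n • (b ^ n * a) := by
  induction n with
  | zero => simp
  | succ n ih =>
    rw [pow_succ, ← mul_assoc, ih, smul_mul_assoc, mul_assoc, h, mul_smul_comm, smul_smul,
      ← mul_assoc, pow_succ]

theorem pow_mul_eq_smul_of_mul_eq_smul (h : a * b = r • (b * a)) (n : ℕ) :
    a ^ n * b = r ^ n • (b * a ^ n) := by
  induction n with
  | zero => simp
  | succ n ih =>
    rw [pow_succ', mul_assoc, ih, mul_smul_comm, ← mul_assoc, h, smul_mul_assoc, smul_smul,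
      mul_assoc, pow_succ', mul_comm]

theorem exists_mul_pow_eq_smul_pow_mul_pow (h : a * b = r • (b * a)) (n : ℕ) :
    ∃ s : R, (b * a) ^ n = s • (b ^ n * a ^ n) := by
  induction n with
  | zero => exact ⟨1, by simp⟩
  | succ n ih =>
    obtain ⟨s, hs⟩ := ih
    refine ⟨s * r ^ n, ?_⟩
    rw [pow_succ, hs, smul_mul_assoc, mul_assoc, ← mul_assoc (a ^ n),
      pow_mul_eq_smul_of_mul_eq_smul h, smul_mul_assoc, mul_smul_comm, smul_smul,
      pow_succ b, pow_succ a]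
    simp only [mul_assoc]

theorem mul_pow_eq_zero_of_mul_eq_smul (h : a * b = r • (b * a)) {n : ℕ} (ha : a ^ n = 0) :
    (b * a) ^ n = 0 := by
  obtain ⟨s, hs⟩ := exists_mul_pow_eq_smul_pow_mul_pow h n
  rw [hs, ha, mul_zero, smul_zero]

end SkewCommute

theorem Submodule.eq_top_of_one_mem_of_mul_mem {R A : Type*} [CommSemiring R] [Semiring A]
    [Algebra R A] {s : Set A} (hs : Algebra.adjoin R s = ⊤) (S : Submodule R A) (h1 : 1 ∈ S)
    (hmul : ∀ x ∈ s, ∀ y ∈ S, x * y ∈ S) : S = ⊤ := by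
  have hstable : ∀ x ∈ Algebra.adjoin R s, ∀ y ∈ S, x * y ∈ S := by
    intro x hx
    induction hx using Algebra.adjoin_induction with
    | mem x hx => exact hmul x hx
    | algebraMap r => exact fun y hy => (Algebra.smul_def r y) ▸ S.smul_mem r hy
    | add x x' _ _ hx hx' =>
      exact fun y hy => (add_mul x x' y).symm ▸ S.add_mem (hx y hy) (hx' y hy)
    | mul x x' _ _ hx hx' => exact fun y hy => (mul_assoc x x' y).symm ▸ hx _ (hx' y hy)
  exact eq_top_iff'.2 fun x => by simpa using hstable x (hs ▸ trivial) 1 h1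

theorem Submodule.mul_mem_span_range {R A ι : Type*} [CommSemiring R] [Semiring A] [Algebra R A]
    {v : ι → A} {x : A} (h : ∀ i, x * v i ∈ span R (Set.range v)) {y : A}
    (hy : y ∈ span R (Set.range v)) : x * y ∈ span R (Set.range v) := by
  have : (span R (Set.range v)).map (LinearMap.mulLeft R x) ≤ span R (Set.range v) :=
    (Submodule.map_span_le _ _ _).2 (Set.forall_mem_range.2 h)
  exact this ⟨y, hy, rfl⟩

theorem finrank_eq_card_of_span_eq_top_of_surjective {R V W ι : Type*} [Ring R]
    [StrongRankCondition R] [AddCommGroup V] [Module R V] [AddCommGroup W] [Module R W]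
    [Fintype ι] {v : ι → V} (hv : Submodule.span R (Set.range v) = ⊤) {f : V →ₗ[R] W}
    (hf : Function.Surjective f) (hW : Module.finrank R W = Fintype.card ι) :
    Module.finrank R V = Fintype.card ι := by
  have : Module.Finite R V := ⟨Submodule.fg_def.2 ⟨_, Set.finite_range v, hv⟩⟩
  exact le_antisymm (finrank_le_of_span_eq_top hv) (hW ▸ f.finrank_le_finrank_of_surjective hf)

theorem Subalgebra.eq_top_of_basis_mem {R A ι : Type*} [CommSemiring R] [Semiring A] [Algebra R A]
    {S : Subalgebra R A} (b : Module.Basis ι R A) (h : ∀ i, b i ∈ S) : S = ⊤ :=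
  eq_top_iff.2 fun x _ =>
    (Submodule.span_le (p := Subalgebra.toSubmodule S)).2 (Set.range_subset_iff.2 h) (b.mem_span x)

namespace UqRel

variable {p : ℕ} {U : Type} [Ring U] [Algebra ℂ U] {E F K Ki : U} (h : UqRel p E F K Ki)
include h

theorem E_mul_Ki : E * Ki = qval p ^ 2 • (Ki * E) := by
  calc E * Ki = Ki * (K * E) * Ki := by rw [← mul_assoc, h.hKiK, one_mul]
    _ = qval p ^ 2 • (Ki * E) := by
      rw [h.hKE, mul_smul_comm, smul_mul_assoc, mul_assoc, mul_assoc, h.hKKi, mul_one]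

theorem Ki_mul_E : Ki * E = (qval p)⁻¹ ^ 2 • (E * Ki) := by
  rw [h.E_mul_Ki, smul_smul, ← mul_pow, inv_mul_cancel₀ (qval_ne_zero p), one_pow, one_smul]

theorem Ki_mul_F : Ki * F = qval p ^ 2 • (F * Ki) := by
  have hF : F * Ki = (qval p)⁻¹ ^ 2 • (Ki * F) := by
    calc F * Ki = Ki * (K * F) * Ki := by rw [← mul_assoc, h.hKiK, one_mul]
      _ = (qval p)⁻¹ ^ 2 • (Ki * F) := by
        rw [h.hKF, mul_smul_comm, smul_mul_assoc, mul_assoc, mul_assoc, h.hKKi, mul_one]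
  rw [hF, smul_smul, ← mul_pow, mul_inv_cancel₀ (qval_ne_zero p), one_pow, one_smul]

theorem E_mul_F :
    E * F = F * E + (qval p - (qval p)⁻¹)⁻¹ • K - (qval p - (qval p)⁻¹)⁻¹ • Ki := by
  rw [add_sub_assoc, ← smul_sub, ← h.hEF, add_sub_cancel]

theorem Ki_pow : Ki ^ (2 * p) = 1 := by
  have hcomm : Commute Ki K := h.hKiK.trans h.hKKi.symm
  calc Ki ^ (2 * p) = Ki ^ (2 * p) * K ^ (2 * p) := by rw [h.hK2p, mul_one]
    _ = 1 := by rw [← hcomm.mul_pow, h.hKiK, one_pow]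

theorem K_eq_Ki_pow (hp : p ≠ 0) : K = Ki ^ (2 * p - 1) := by
  have hsplit : Ki ^ (2 * p) = Ki * Ki ^ (2 * p - 1) := by
    rw [← pow_succ', Nat.sub_add_cancel (by omega)]
  calc K = K * Ki ^ (2 * p) := by rw [h.Ki_pow, mul_one]
    _ = Ki ^ (2 * p - 1) := by rw [hsplit, ← mul_assoc, h.hKKi, one_mul]

end UqRel

def loopImage (p : ℕ) {U : Type} [Ring U] [Algebra ℂ U] (E F K Ki : U) : Fin 4 → U :=
  ![K + ((qval p)⁻¹ * (qval p - (qval p)⁻¹) ^ 2) • (F * E),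
    ((qval p)⁻¹ * (qval p - (qval p)⁻¹)) • F, (qval p - (qval p)⁻¹) • (Ki * E), Ki]

theorem UqRel.lift_loopImage_eq_of_loopRel {p : ℕ} (hp : 2 ≤ p) {U : Type} [Ring U]
    [Algebra ℂ U] {E F K Ki : U} (h : UqRel p E F K Ki) ⦃x y : FreeAlgebra ℂ (Fin 4)⦄
    (r : LoopRel p x y) :
    FreeAlgebra.lift ℂ (loopImage p E F K Ki) x
      = FreeAlgebra.lift ℂ (loopImage p E F K Ki) y := by
  have hq := qval_ne_zero p
  have hq' := qval_sub_inv_ne_zero hp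
  cases r
  case bp => simp [loopImage, smul_pow, h.hFp]
  case cp => simp [loopImage, smul_pow, mul_pow_eq_zero_of_mul_eq_smul h.E_mul_Ki h.hEp]
  case d2p => simp [loopImage, h.Ki_pow]
  -- the remaining relations are quadratic: normal-order both sides as `F…E…K^{±1}…`
  all_goals
    simp only [map_mul, map_add, map_sub, map_smul, map_one, FreeAlgebra.lift_ι_apply, loopImage,
      Matrix.cons_val, smul_add, smul_sub, add_mul, sub_mul, mul_add, mul_sub, smul_mul_assoc,
      mul_smul_comm, smul_smul, mul_assoc, mul_one, h.E_mul_F, mul_mul_eq_of_mul_eq h.E_mul_F,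
      mul_mul_eq_of_mul_eq h.hKE, h.hKF, h.Ki_mul_E, mul_mul_eq_of_mul_eq h.Ki_mul_E, h.Ki_mul_F,
      mul_mul_eq_of_mul_eq h.Ki_mul_F, h.hKKi, h.hKiK]
    match_scalars <;> field_simp <;> ring

namespace UqRel

variable {p : ℕ} (hp : 2 ≤ p) {U : Type} [Ring U] [Algebra ℂ U] {E F K Ki : U}
  (h : UqRel p E F K Ki)

def loopHom : LoopAlg p →ₐ[ℂ] U :=
  RingQuot.liftAlgHom ℂ
    ⟨FreeAlgebra.lift ℂ (loopImage p E F K Ki), h.lift_loopImage_eq_of_loopRel hp⟩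

theorem loopHom_mkAlgHom_ι (i : Fin 4) :
    h.loopHom hp (RingQuot.mkAlgHom ℂ (LoopRel p) (FreeAlgebra.ι ℂ i))
      = loopImage p E F K Ki i := by
  rw [loopHom, RingQuot.liftAlgHom_mkAlgHom_apply, FreeAlgebra.lift_ι_apply]

theorem generators_mem_range_loopHom :
    E ∈ (h.loopHom hp).range ∧ F ∈ (h.loopHom hp).range ∧ K ∈ (h.loopHom hp).range := by
  have mem (i : Fin 4) : loopImage p E F K Ki i ∈ (h.loopHom hp).range :=
    ⟨_, h.loopHom_mkAlgHom_ι hp i⟩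
  have hK : K ∈ (h.loopHom hp).range := by
    simpa only [loopImage, Matrix.cons_val, ← h.K_eq_Ki_pow (by omega)]
      using pow_mem (mem 3) (2 * p - 1)
  refine ⟨?_, ?_, hK⟩
  · convert Subalgebra.smul_mem _ (mul_mem hK (mem 2)) (qval p - (qval p)⁻¹)⁻¹ using 1
    simp only [loopImage, Matrix.cons_val, mul_smul_comm, ← mul_assoc, h.hKKi, one_mul, smul_smul]
    rw [inv_mul_cancel₀ (qval_sub_inv_ne_zero hp), one_smul]
  · convert Subalgebra.smul_mem _ (mem 1) ((qval p)⁻¹ * (qval p - (qval p)⁻¹))⁻¹ using 1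
    simp only [loopImage, Matrix.cons_val, smul_smul]
    rw [inv_mul_cancel₀ (mul_ne_zero (inv_ne_zero (qval_ne_zero p)) (qval_sub_inv_ne_zero hp)),
      one_smul]

theorem loopHom_surjective (BU : Module.Basis (Fin p × Fin p × Fin (2 * p)) ℂ U)
    (hBU : ∀ m : Fin p × Fin p × Fin (2 * p),
      BU m = E ^ (m.1 : ℕ) * F ^ (m.2.1 : ℕ) * K ^ (m.2.2 : ℕ)) :
    Function.Surjective (h.loopHom hp) := by
  obtain ⟨hE, hF, hK⟩ := h.generators_mem_range_loopHom hp
  rw [← AlgHom.range_eq_top]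
  exact Subalgebra.eq_top_of_basis_mem BU fun m =>
    hBU m ▸ mul_mem (mul_mem (pow_mem hE _) (pow_mem hF _)) (pow_mem hK _)

end UqRel

namespace LoopAlg

variable (p : ℕ)

theorem adjoin_range_generators_eq_top :
    Algebra.adjoin ℂ
        (Set.range fun i : Fin 4 => RingQuot.mkAlgHom ℂ (LoopRel p) (FreeAlgebra.ι ℂ i))
      = ⊤ := by
  rw [Algebra.adjoin_range_eq_range_freeAlgebra_lift, AlgHom.range_eq_top]
  convert RingQuot.mkAlgHom_surjective ℂ (LoopRel p)
  exact FreeAlgebra.hom_ext (funext fun _ => FreeAlgebra.lift_ι_apply _ _)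

theorem genD_mul_genA : genD p * genA p = genA p * genD p := by
  simpa [genA, genD] using RingQuot.mkAlgHom_rel ℂ (LoopRel.da (p := p))

theorem genD_mul_genB : genD p * genB p = qval p ^ 2 • (genB p * genD p) := by
  simpa [genB, genD] using RingQuot.mkAlgHom_rel ℂ (LoopRel.db (p := p))

theorem genD_mul_genC : genD p * genC p = (qval p)⁻¹ ^ 2 • (genC p * genD p) := by
  simpa [genC, genD] using RingQuot.mkAlgHom_rel ℂ (LoopRel.dc (p := p))

theorem genA_mul_genD : genA p * genD p = 1 + qval p ^ 2 • (genB p * genC p) := by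
  rw [← sub_eq_iff_eq_add]
  simpa [genA, genB, genC, genD] using RingQuot.mkAlgHom_rel ℂ (LoopRel.det (p := p))

theorem genC_mul_genB : genC p * genB p = genB p * genC p
    + ((qval p)⁻¹ * (qval p - (qval p)⁻¹)) •
        (1 + qval p ^ 2 • (genB p * genC p) - genD p * genD p) := by
  rw [← genA_mul_genD, ← genD_mul_genA]
  simpa [genA, genB, genC, genD] using RingQuot.mkAlgHom_rel ℂ (LoopRel.cb (p := p))

theorem genB_pow : genB p ^ p = 0 := by
  simpa [genB] using RingQuot.mkAlgHom_rel ℂ (LoopRel.bp (p := p))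

theorem genC_pow : genC p ^ p = 0 := by
  simpa [genC] using RingQuot.mkAlgHom_rel ℂ (LoopRel.cp (p := p))

theorem genD_pow : genD p ^ (2 * p) = 1 := by
  simpa [genD] using RingQuot.mkAlgHom_rel ℂ (LoopRel.d2p (p := p))

def monomialSpan : Submodule ℂ (LoopAlg p) :=
  Submodule.span ℂ (Set.range (fun m : Fin p × Fin p × Fin (2 * p) =>
    genB p ^ (m.1 : ℕ) * genC p ^ (m.2.1 : ℕ) * genD p ^ (m.2.2 : ℕ)))

variable {p}

theorem monomial_mem_monomialSpan (i j k : ℕ) :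
    genB p ^ i * genC p ^ j * genD p ^ k ∈ monomialSpan p := by
  rcases le_or_gt p i with hi | hi
  · rw [← Nat.add_sub_cancel' hi, pow_add, genB_pow, zero_mul, zero_mul, zero_mul]
    exact zero_mem _
  rcases le_or_gt p j with hj | hj
  · rw [← Nat.add_sub_cancel' hj, pow_add, genC_pow, zero_mul, mul_zero, zero_mul]
    exact zero_mem _
  rw [← Nat.mod_add_div k (2 * p), pow_add, pow_mul, genD_pow, one_pow, mul_one]
  exact Submodule.subset_span
    ⟨(⟨i, hi⟩, ⟨j, hj⟩, ⟨k % (2 * p), Nat.mod_lt _ (by omega)⟩), rfl⟩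

theorem mul_mem_monomialSpan {x : LoopAlg p}
    (hx : ∀ i j k : ℕ, x * (genB p ^ i * genC p ^ j * genD p ^ k) ∈ monomialSpan p)
    {y : LoopAlg p} (hy : y ∈ monomialSpan p) : x * y ∈ monomialSpan p :=
  Submodule.mul_mem_span_range (fun _ => hx _ _ _) hy

theorem genB_mul_mem {y : LoopAlg p} (hy : y ∈ monomialSpan p) : genB p * y ∈ monomialSpan p :=
  mul_mem_monomialSpan (fun i j k => by
    rw [← mul_assoc, ← mul_assoc, ← pow_succ']
    exact monomial_mem_monomialSpan _ _ _) hy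

theorem genD_mul_mem {y : LoopAlg p} (hy : y ∈ monomialSpan p) :
    genD p * y ∈ monomialSpan p := by
  refine mul_mem_monomialSpan (fun i j k => ?_) hy
  have hcomm : genD p * (genB p ^ i * genC p ^ j * genD p ^ k)
      = (qval p ^ 2) ^ i • ((qval p)⁻¹ ^ 2) ^ j •
          (genB p ^ i * genC p ^ j * genD p ^ (k + 1)) := by
    rw [← mul_assoc, ← mul_assoc, mul_pow_eq_smul_of_mul_eq_smul (genD_mul_genB p),
      smul_mul_assoc, smul_mul_assoc, mul_assoc _ (genD p),
      mul_pow_eq_smul_of_mul_eq_smul (genD_mul_genC p), mul_smul_comm, smul_mul_assoc,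
      pow_succ' (genD p) k]
    simp only [mul_assoc]
  rw [hcomm]
  exact Submodule.smul_mem _ _ (Submodule.smul_mem _ _ (monomial_mem_monomialSpan _ _ _))

theorem genC_mul_mem {y : LoopAlg p} (hy : y ∈ monomialSpan p) :
    genC p * y ∈ monomialSpan p := by
  refine mul_mem_monomialSpan (fun i j k => ?_) hy
  induction i with
  | zero =>
    rw [pow_zero, one_mul, ← mul_assoc, ← pow_succ']
    simpa using monomial_mem_monomialSpan 0 (j + 1) k
  | succ i ih =>
    have hmono := monomial_mem_monomialSpan (p := p) i j k
    have hcb := genC_mul_genB p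
    generalize (qval p)⁻¹ * (qval p - (qval p)⁻¹) = r at hcb
    rw [pow_succ', mul_assoc, mul_assoc, ← mul_assoc, hcb]
    simp only [add_mul, smul_mul_assoc, sub_mul, one_mul, mul_assoc] at ih hmono ⊢
    exact add_mem (genB_mul_mem ih) (Submodule.smul_mem _ r (sub_mem
      (add_mem hmono (Submodule.smul_mem _ _ (genB_mul_mem ih)))
      (genD_mul_mem (genD_mul_mem hmono))))

theorem genA_eq_mul_genD_pow (hp : p ≠ 0) :
    genA p = (1 + qval p ^ 2 • (genB p * genC p)) * genD p ^ (2 * p - 1) := by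
  rw [← genA_mul_genD, mul_assoc, ← pow_succ', Nat.sub_add_cancel (by omega), genD_pow, mul_one]

theorem genA_mul_mem (hp : p ≠ 0) {y : LoopAlg p} (hy : y ∈ monomialSpan p) :
    genA p * y ∈ monomialSpan p := by
  have hDy : genD p ^ (2 * p - 1) * y ∈ monomialSpan p := by
    induction 2 * p - 1 with
    | zero => simpa using hy
    | succ n ih => simpa only [pow_succ', mul_assoc] using genD_mul_mem ih
  rw [genA_eq_mul_genD_pow hp, mul_assoc, add_mul, one_mul, smul_mul_assoc, mul_assoc]
  exact Submodule.add_mem _ hDy (Submodule.smul_mem _ _ (genB_mul_mem (genC_mul_mem hDy)))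

theorem monomialSpan_eq_top (hp : p ≠ 0) : monomialSpan p = ⊤ := by
  refine Submodule.eq_top_of_one_mem_of_mul_mem (adjoin_range_generators_eq_top p) _
    (by simpa using monomial_mem_monomialSpan 0 0 0) ?_
  rintro _ ⟨i, rfl⟩ y hy
  fin_cases i
  exacts [genA_mul_mem hp hy, genB_mul_mem hy, genC_mul_mem hy, genD_mul_mem hy]

end LoopAlg

theorem loop_algebra_presentation_general
    (p : ℕ) (hp : 2 ≤ p)
    (U : Type) [Ring U] [Algebra ℂ U]
    (E F K Ki : U) (hrel : UqRel p E F K Ki)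
    -- the monomials `E^m F^n K^l` form a basis of `Ū_q`
    (BU : Module.Basis (Fin p × Fin p × Fin (2 * p)) ℂ U)
    (hBU : ∀ m : Fin p × Fin p × Fin (2 * p),
      BU m = E ^ (m.1 : ℕ) * F ^ (m.2.1 : ℕ) * K ^ (m.2.2 : ℕ)) :
    -- the monomials `bⁱ cʲ dᵏ` form a basis of `A`
    LinearIndependent ℂ (fun m : Fin p × Fin p × Fin (2 * p) =>
      genB p ^ (m.1 : ℕ) * genC p ^ (m.2.1 : ℕ) * genD p ^ (m.2.2 : ℕ))
    ∧ Submodule.span ℂ (Set.range (fun m : Fin p × Fin p × Fin (2 * p) =>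
        genB p ^ (m.1 : ℕ) * genC p ^ (m.2.1 : ℕ) * genD p ^ (m.2.2 : ℕ))) = ⊤
    -- so `dim A = 2p³`
    ∧ Module.finrank ℂ (LoopAlg p) = 2 * p ^ 3
    -- and the stated assignment defines an isomorphism of `ℂ`-algebras `A → Ū_q`
    ∧ ∃ f : LoopAlg p ≃ₐ[ℂ] U,
        f (genA p) = K + ((qval p)⁻¹ * (qval p - (qval p)⁻¹) ^ 2) • (F * E)
        ∧ f (genB p) = ((qval p)⁻¹ * (qval p - (qval p)⁻¹)) • F
        ∧ f (genC p) = (qval p - (qval p)⁻¹) • (Ki * E)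
        ∧ f (genD p) = Ki := by
  have hcard : Fintype.card (Fin p × Fin p × Fin (2 * p)) = 2 * p ^ 3 := by
    simp only [Fintype.card_prod, Fintype.card_fin]
    ring
  have : FiniteDimensional ℂ U := Module.Finite.of_basis BU
  let f := hrel.loopHom hp
  have hspan := LoopAlg.monomialSpan_eq_top (p := p) (by omega)
  have hsurj : Function.Surjective f := hrel.loopHom_surjective hp BU hBU
  have hdimU := Module.finrank_eq_card_basis BU
  have hdimA := finrank_eq_card_of_span_eq_top_of_surjective hspan (f := f.toLinearMap) hsurj hdimU
  have : FiniteDimensional ℂ (LoopAlg p) := .of_finrank_pos (by rw [hdimA, hcard]; positivity)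
  have hinj : Function.Injective f :=
    (LinearMap.injective_iff_surjective_of_finrank_eq_finrank (f := f.toLinearMap)
      (hdimA.trans hdimU.symm)).2 hsurj
  exact ⟨linearIndependent_of_top_le_span_of_card_eq_finrank hspan.ge hdimA.symm, hspan,
    hdimA.trans hcard, AlgEquiv.ofBijective f ⟨hinj, hsurj⟩, hrel.loopHom_mkAlgHom_ι hp 0,
    hrel.loopHom_mkAlgHom_ι hp 1, hrel.loopHom_mkAlgHom_ι hp 2, hrel.loopHom_mkAlgHom_ι hp 3⟩

theorem loop_algebra_presentation
    (p : ℕ) (hp : 2 ≤ p)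
    (U : Type) [Ring U] [Algebra ℂ U] [FiniteDimensional ℂ U]
    (E F K Ki : U) (hrel : UqRel p E F K Ki)
    -- the monomials `E^m F^n K^l` form a basis of `Ū_q`
    (BU : Module.Basis (Fin p × Fin p × Fin (2 * p)) ℂ U)
    (hBU : ∀ m : Fin p × Fin p × Fin (2 * p),
      BU m = E ^ (m.1 : ℕ) * F ^ (m.2.1 : ℕ) * K ^ (m.2.2 : ℕ)) :
    -- the monomials `bⁱ cʲ dᵏ` form a basis of `A`
    LinearIndependent ℂ (fun m : Fin p × Fin p × Fin (2 * p) =>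
      genB p ^ (m.1 : ℕ) * genC p ^ (m.2.1 : ℕ) * genD p ^ (m.2.2 : ℕ))
    ∧ Submodule.span ℂ (Set.range (fun m : Fin p × Fin p × Fin (2 * p) =>
        genB p ^ (m.1 : ℕ) * genC p ^ (m.2.1 : ℕ) * genD p ^ (m.2.2 : ℕ))) = ⊤
    -- so `dim A = 2p³`
    ∧ Module.finrank ℂ (LoopAlg p) = 2 * p ^ 3
    -- and the stated assignment defines an isomorphism of `ℂ`-algebras `A → Ū_q`
    ∧ ∃ f : LoopAlg p ≃ₐ[ℂ] U,
        f (genA p) = K + ((qval p)⁻¹ * (qval p - (qval p)⁻¹) ^ 2) • (F * E)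
        ∧ f (genB p) = ((qval p)⁻¹ * (qval p - (qval p)⁻¹)) • F
        ∧ f (genC p) = (qval p - (qval p)⁻¹) • (Ki * E)
        ∧ f (genD p) = Ki :=
  loop_algebra_presentation_general p hp U E F K Ki hrel BU hBU

end
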